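/- arXiv:2012.07323 — 11 statements merged into one kernel-verified Lean document; each statement's English description precedes it below -/
import Mathlib

section
/- Let 𝔫 ∈ A be a nonconstant polynomial and 𝔪 ∈ A a monic irreducible polynomial dividing 𝔫. Let 𝔞 ∈ A be coprime to 𝔫 and let η ∈ SL₂(A) satisfy η₂₁ ≡ 0 (mod 𝔫) and η₂₂ ≡ 𝔞 (mod 𝔫). Put D = [[1,0],[0,𝔪]] ∈ M₂(A). Then, as subsets of the 2×2 matrices over A, one has the double coset equality Γ₁(𝔫)·(η⁻¹Dη)·Γ₁(𝔫) = Γ₁(𝔫)·D·Γ₁(𝔫). -/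
open Polynomial Matrix

/-- `Γ₁(𝔫)` as a set of 2×2 matrices over `A = F[t]`:
matrices of determinant 1 congruent to `[[1,*],[0,1]]` mod `𝔫`. -/
def Gamma1 (F : Type*) [Field F] (n : Polynomial F) :
    Set (Matrix (Fin 2) (Fin 2) (Polynomial F)) :=
  {γ | γ.det = 1 ∧ n ∣ γ 1 0 ∧ n ∣ (γ 0 0 - 1) ∧ n ∣ (γ 1 1 - 1)}

lemma Gamma1.mul_mem' {F : Type*} [Field F] {n : Polynomial F}
    {g h : Matrix (Fin 2) (Fin 2) (Polynomial F)}
    (hg : g ∈ Gamma1 F n) (hh : h ∈ Gamma1 F n) : g * h ∈ Gamma1 F n := by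
  obtain ⟨hg1, hgc, hga, hgd⟩ := hg
  obtain ⟨hh1, hhc, hha, hhd⟩ := hh
  refine ⟨by rw [Matrix.det_mul, hg1, hh1, one_mul], ?_, ?_, ?_⟩
  · have e : (g * h) 1 0 = g 1 0 * h 0 0 + g 1 1 * h 1 0 := by
      simp [Matrix.mul_apply, Fin.sum_univ_two]
    rw [e]
    exact dvd_add (hgc.mul_right _) (hhc.mul_left _)
  · have e : (g * h) 0 0 - 1 = (g 0 0 - 1) * h 0 0 + (h 0 0 - 1) + g 0 1 * h 1 0 := by
      simp [Matrix.mul_apply, Fin.sum_univ_two]; ring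
    rw [e]
    exact dvd_add (dvd_add (hga.mul_right _) hha) (hhc.mul_left _)
  · have e : (g * h) 1 1 - 1 = g 1 0 * h 0 1 + (g 1 1 - 1) * h 1 1 + (h 1 1 - 1) := by
      simp [Matrix.mul_apply, Fin.sum_univ_two]; ring
    rw [e]
    exact dvd_add (dvd_add (hgc.mul_right _) (hgd.mul_right _)) hhd

lemma Gamma1.adjugate_mem' {F : Type*} [Field F] {n : Polynomial F}
    {g : Matrix (Fin 2) (Fin 2) (Polynomial F)}
    (hg : g ∈ Gamma1 F n) : g.adjugate ∈ Gamma1 F n := by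
  obtain ⟨hg1, hgc, hga, hgd⟩ := hg
  rw [Matrix.adjugate_fin_two]
  refine ⟨?_, ?_, ?_, ?_⟩
  · rw [Matrix.det_fin_two_of]
    rw [Matrix.det_fin_two] at hg1
    linear_combination hg1
  · simpa using hgc.neg_right
  · simpa using hgd
  · simpa using hga

theorem stmt0 (p : ℕ) (hp : p.Prime) (F : Type*) [Field F] [Fintype F] [CharP F p]
    (𝔫 𝔪 𝔞 : Polynomial F) (h𝔫 : 1 ≤ 𝔫.natDegree)
    (h𝔪mon : 𝔪.Monic) (h𝔪irr : Irreducible 𝔪) (h𝔪dvd : 𝔪 ∣ 𝔫)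
    (h𝔞 : IsCoprime 𝔞 𝔫)
    (η : Matrix (Fin 2) (Fin 2) (Polynomial F)) (hη : η.det = 1)
    (hη21 : 𝔫 ∣ η 1 0) (hη22 : 𝔫 ∣ (η 1 1 - 𝔞)) :
    {y | ∃ g₁ ∈ Gamma1 F 𝔫, ∃ g₂ ∈ Gamma1 F 𝔫,
        y = g₁ * (η⁻¹ * !![1, 0; 0, 𝔪] * η) * g₂} =
    {y | ∃ g₁ ∈ Gamma1 F 𝔫, ∃ g₂ ∈ Gamma1 F 𝔫,
        y = g₁ * !![1, 0; 0, 𝔪] * g₂} := by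
  obtain ⟨𝔫', h𝔫'⟩ := h𝔪dvd
  obtain ⟨c₁, hc₁⟩ := hη21
  set a := η 0 0 with ha
  set b := η 0 1 with hb
  set d := η 1 1 with hd
  have hR : a * d - b * (𝔪 * (𝔫' * c₁)) = 1 := by
    rw [Matrix.det_fin_two] at hη
    linear_combination hη + b * hc₁ + b * c₁ * h𝔫'
  set γ : Matrix (Fin 2) (Fin 2) (Polynomial F) :=
    !![a * d - 𝔪 ^ 2 * (𝔫' * c₁) * b, -(b ^ 2 * d * (1 - 𝔪) ^ 2 * (𝔫' * c₁));
       -(a * 𝔪 * (𝔫' * c₁) * (1 - 𝔪)), 1 - 𝔪 * (𝔫' * c₁) * b * (1 - 𝔪) * (a * d - b * (𝔫' * c₁))] with hγdef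
  set u : Matrix (Fin 2) (Fin 2) (Polynomial F) := !![1, b * d * (1 - 𝔪); 0, 1] with hudef
  have hγ : γ ∈ Gamma1 F 𝔫 := by
    refine ⟨?_, ⟨-(a * c₁ * (1 - 𝔪)), ?_⟩, ⟨b * c₁ * (1 - 𝔪), ?_⟩, ⟨-(c₁ * b * (1 - 𝔪) * (a * d - b * (𝔫' * c₁))), ?_⟩⟩
    · rw [hγdef, Matrix.det_fin_two_of]
      linear_combination (1 - b * 𝔪 * (𝔫' * c₁) * (1 - 𝔪) * (a * d - b * (𝔪 * (𝔫' * c₁)) + 1)) * hR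
    · rw [hγdef]; simp only [Matrix.cons_val', Matrix.cons_val_zero, Matrix.cons_val_one,
        Matrix.head_cons, Matrix.head_fin_const, Matrix.empty_val', Matrix.cons_val_fin_one,
        Matrix.of_apply]
      rw [h𝔫']; ring
    · rw [hγdef]; simp only [Matrix.cons_val', Matrix.cons_val_zero, Matrix.cons_val_one,
        Matrix.head_cons, Matrix.head_fin_const, Matrix.empty_val', Matrix.cons_val_fin_one,
        Matrix.of_apply]
      rw [h𝔫']
      linear_combination hR
    · rw [hγdef]; simp only [Matrix.cons_val', Matrix.cons_val_zero, Matrix.cons_val_one,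
        Matrix.head_cons, Matrix.head_fin_const, Matrix.empty_val', Matrix.cons_val_fin_one,
        Matrix.of_apply]
      rw [h𝔫']; ring
  have hu : u ∈ Gamma1 F 𝔫 := by
    refine ⟨?_, ⟨0, ?_⟩, ⟨0, ?_⟩, ⟨0, ?_⟩⟩ <;> rw [hudef] <;> simp [Matrix.det_fin_two_of]
  have hkey : η⁻¹ * !![1, 0; 0, 𝔪] * η = γ * !![1, 0; 0, 𝔪] * u := by
    have hinv : η⁻¹ * η = 1 := Matrix.nonsing_inv_mul η (by rw [hη]; exact isUnit_one)
    have hmain : !![1, 0; 0, 𝔪] * η = η * (γ * !![1, 0; 0, 𝔪] * u) := by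
      have hηeq : η = !![a, b; 𝔪 * (𝔫' * c₁), d] := by
        rw [Matrix.eta_fin_two η, ← ha, ← hb, ← hd, hc₁, h𝔫']
        norm_num [mul_assoc]
      rw [hηeq, hγdef, hudef]
      refine Matrix.ext fun i j => ?_
      fin_cases i <;> fin_cases j <;>
        simp [Matrix.mul_apply, Fin.sum_univ_two] <;>
        (first
          | ring1
          | linear_combination (-a) * hR
          | linear_combination (-(𝔪 ^ 2 * (𝔫' * c₁))) * hR
          | linear_combination (-(b * (1 - 𝔪) * (a * d - b * (𝔪 * (𝔫' * c₁)) + 1))) * hR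
          | linear_combination a * hR
          | linear_combination (𝔪 ^ 2 * (𝔫' * c₁)) * hR
          | linear_combination (b * (1 - 𝔪) * (a * d - b * (𝔪 * (𝔫' * c₁)) + 1)) * hR)
    calc η⁻¹ * !![1, 0; 0, 𝔪] * η = η⁻¹ * (!![1, 0; 0, 𝔪] * η) := by rw [mul_assoc]
      _ = η⁻¹ * (η * (γ * !![1, 0; 0, 𝔪] * u)) := by rw [hmain]
      _ = (η⁻¹ * η) * (γ * !![1, 0; 0, 𝔪] * u) := by rw [← mul_assoc]
      _ = γ * !![1, 0; 0, 𝔪] * u := by rw [hinv, one_mul]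
  ext y
  simp only [Set.mem_setOf_eq]
  constructor
  · rintro ⟨g₁, hg₁, g₂, hg₂, rfl⟩
    refine ⟨g₁ * γ, Gamma1.mul_mem' hg₁ hγ, u * g₂, Gamma1.mul_mem' hu hg₂, ?_⟩
    rw [hkey]
    simp only [mul_assoc]
  · rintro ⟨g₁, hg₁, g₂, hg₂, rfl⟩
    refine ⟨g₁ * γ.adjugate, Gamma1.mul_mem' hg₁ (Gamma1.adjugate_mem' hγ),
      u.adjugate * g₂, Gamma1.mul_mem' (Gamma1.adjugate_mem' hu) hg₂, ?_⟩
    rw [hkey]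
    have h1 : γ.adjugate * γ = 1 := by rw [Matrix.adjugate_mul, hγ.1, one_smul]
    have h2 : u * u.adjugate = 1 := by rw [Matrix.mul_adjugate, hu.1, one_smul]
    calc g₁ * !![1, 0; 0, 𝔪] * g₂
        = g₁ * (γ.adjugate * γ) * !![1, 0; 0, 𝔪] * (u * u.adjugate) * g₂ := by
          rw [h1, h2]; simp only [Matrix.mul_one]
      _ = g₁ * γ.adjugate * (γ * !![1, 0; 0, 𝔪] * u) * (u.adjugate * g₂) := by
          simp only [mul_assoc]
end

section
/- For every nonzero column vector v ∈ K², there exist γ ∈ Γ₁(t) and λ ∈ K^× such that γv = λ·(1,0)ᵀ or γv = λ·(0,1)ᵀ. Moreover, there exist no γ ∈ Γ₁(t) and λ ∈ K^× with γ·(1,0)ᵀ = λ·(0,1)ᵀ. In other words, the set of cusps of Γ₁(t) consists of exactly the two classes of ∞ = (1:0) and 0 = (0:1). -/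
/-!
Clearing denominators and dividing by a gcd, every nonzero `v ∈ K²` is a multiple of a primitive
vector `(a, b) ∈ A²`, say `x a + y b = 1`. Modulo `t`, membership in `Γ₁(t)` only involves values
at `t = 0`, and `x(0) a(0) + y(0) b(0) = 1`. If `b(0) = 0`, the matrix with rows `a(0) (x, y)` and
`a(0)⁻¹ (-b, a)` lies in `Γ₁(t)` and sends `(a, b)` to `(a(0), 0)`; otherwise the matrix with rows
`b(0)⁻¹ (b, -a)` and `b(0) (x, y) + x(0) (-b, a)` lies in `Γ₁(t)` and sends `(a, b)` to
`(0, b(0))`. The cusps `∞` and `0` are distinct since the upper left entry of an element of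
`Γ₁(t)` is `1` mod `t`, so it cannot vanish.
-/

open Polynomial Matrix

theorem exists_eq_smul_isCoprime {R : Type*} [CommRing R] [IsDomain R] [IsPrincipalIdealRing R]
    (w : Fin 2 → R) (hw : w ≠ 0) :
    ∃ c : R, c ≠ 0 ∧ ∃ a b : R, IsCoprime a b ∧ w = c • ![a, b] := by
  have hw' : w 0 ≠ 0 ∨ w 1 ≠ 0 := by
    by_contra! h
    exact hw (funext fun i => by fin_cases i <;> simp [h.1, h.2])
  obtain ⟨a, b, c, hab, ha, hb⟩ :=
    hw'.elim (UniqueFactorizationMonoid.exists_reduced_factors _ · (w 1))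
      (UniqueFactorizationMonoid.exists_reduced_factors' (w 0) _)
  refine ⟨c, ?_, a, b, hab.isCoprime, funext fun i => by fin_cases i <;> simp [ha, hb]⟩
  rintro rfl
  exact hw (funext fun i => by fin_cases i <;> simp [← ha, ← hb])

theorem exists_eq_smul_algebraMap_isCoprime {R K : Type*} [CommRing R] [IsDomain R]
    [IsPrincipalIdealRing R] [Field K] [Algebra R K] [IsFractionRing R K]
    (v : Fin 2 → K) (hv : v ≠ 0) :
    ∃ s : K, s ≠ 0 ∧ ∃ a b : R, IsCoprime a b ∧ v = s • (algebraMap R K ∘ ![a, b]) := by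
  obtain ⟨d, hd⟩ := IsLocalization.exist_integer_multiples_of_finite (nonZeroDivisors R) v
  choose w hw using hd
  have hd0 : algebraMap R K d ≠ 0 := IsFractionRing.to_map_ne_zero_of_mem_nonZeroDivisors d.2
  have hv_eq : v = (algebraMap R K d)⁻¹ • (algebraMap R K ∘ w) := by
    funext i
    simp [hw i, Algebra.smul_def, hd0]
  have hw0 : w ≠ 0 := by
    rintro rfl
    exact hv (by simpa using hv_eq)
  obtain ⟨c, hc, a, b, hab, rfl⟩ := exists_eq_smul_isCoprime w hw0
  refine ⟨(algebraMap R K d)⁻¹ * algebraMap R K c, ?_, a, b, hab, ?_⟩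
  · exact mul_ne_zero (inv_ne_zero hd0)
      (IsFractionRing.to_map_ne_zero_of_mem_nonZeroDivisors (mem_nonZeroDivisors_of_ne_zero hc))
  · rw [hv_eq, mul_smul]
    congr 1
    funext i
    fin_cases i <;> simp

theorem Matrix.map_mulVec_smul_comp {m n R K : Type*} [Fintype n] [CommRing R] [CommRing K]
    (f : R →+* K) (M : Matrix m n R) (s : K) (w : n → R) :
    M.map f *ᵥ (s • (f ∘ w)) = s • (f ∘ (M *ᵥ w)) := by
  rw [mulVec_smul]
  congr 1
  funext i
  exact (RingHom.map_mulVec f M w i).symm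

namespace Gamma1

variable {F : Type*} [Field F]

theorem apply_zero_zero_ne_zero {n : F[X]} (hn : ¬IsUnit n) {γ : Matrix (Fin 2) (Fin 2) F[X]}
    (hγ : γ ∈ Gamma1 F n) : γ 0 0 ≠ 0 := fun h =>
  hn (isUnit_of_dvd_one (by simpa [h] using hγ.2.2.1))

theorem mem_X_iff {γ : Matrix (Fin 2) (Fin 2) F[X]} :
    γ ∈ Gamma1 F X ↔
      γ.det = 1 ∧ (γ 1 0).eval 0 = 0 ∧ (γ 0 0).eval 0 = 1 ∧ (γ 1 1).eval 0 = 1 := by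
  simp only [Gamma1, Set.mem_ofPred_eq, X_dvd_iff, coeff_zero_eq_eval_zero, eval_sub, eval_one,
    sub_eq_zero]

theorem exists_mulVec_eq_infty {x y a b : F[X]} (hxy : x * a + y * b = 1) (hb : b.eval 0 = 0) :
    ∃ γ ∈ Gamma1 F X, ∃ c : F[X], c ≠ 0 ∧ γ *ᵥ ![a, b] = ![c, 0] := by
  have hxy0 : x.eval 0 * a.eval 0 = 1 := by simpa [hb] using congrArg (eval 0) hxy
  set u := a.eval 0
  have hu : u ≠ 0 := right_ne_zero_of_mul_eq_one hxy0
  refine ⟨!![C u * x, C u * y; -(C u⁻¹ * b), C u⁻¹ * a], mem_X_iff.2 ⟨?_, ?_, ?_, ?_⟩, C u,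
    C_ne_zero.2 hu, ?_⟩
  · have hCu : C u * C u⁻¹ = 1 := by rw [← C_mul, mul_inv_cancel₀ hu, C_1]
    rw [det_fin_two_of]
    linear_combination C u * C u⁻¹ * hxy + hCu
  · simp [hb]
  · simpa [mul_comm] using hxy0
  · simpa using inv_mul_cancel₀ hu
  · funext i; fin_cases i <;> simp [vecHead, vecTail]
    · linear_combination C u * hxy
    · ring

theorem exists_mulVec_eq_zero {x y a b : F[X]} (hxy : x * a + y * b = 1) (hb : b.eval 0 ≠ 0) :
    ∃ γ ∈ Gamma1 F X, ∃ c : F[X], c ≠ 0 ∧ γ *ᵥ ![a, b] = ![0, c] := by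
  set u := b.eval 0
  have hxy0 : x.eval 0 * a.eval 0 + y.eval 0 * u = 1 := by simpa using congrArg (eval 0) hxy
  refine ⟨!![C u⁻¹ * b, -(C u⁻¹ * a); C u * x - C (x.eval 0) * b, C u * y + C (x.eval 0) * a],
    mem_X_iff.2 ⟨?_, ?_, ?_, ?_⟩, C u, C_ne_zero.2 hb, ?_⟩
  · have hCu : C u * C u⁻¹ = 1 := by rw [← C_mul, mul_inv_cancel₀ hb, C_1]
    rw [det_fin_two_of]
    linear_combination C u * C u⁻¹ * hxy + hCu
  · simp [u, mul_comm]
  · simpa using inv_mul_cancel₀ hb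
  · simp only [of_apply, cons_val', cons_val_one, cons_val_fin_one, eval_add, eval_mul, eval_C]
    linear_combination hxy0
  · funext i; fin_cases i <;> simp [vecHead, vecTail]
    · ring
    · linear_combination C u * hxy

theorem exists_mulVec_eq_infty_or_zero {a b : F[X]} (hab : IsCoprime a b) :
    ∃ γ ∈ Gamma1 F X, ∃ c : F[X], c ≠ 0 ∧ (γ *ᵥ ![a, b] = ![c, 0] ∨ γ *ᵥ ![a, b] = ![0, c]) := by
  obtain ⟨x, y, hxy⟩ := hab
  by_cases hb : b.eval 0 = 0
  · obtain ⟨γ, hγ, c, hc, h⟩ := exists_mulVec_eq_infty hxy hb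
    exact ⟨γ, hγ, c, hc, .inl h⟩
  · obtain ⟨γ, hγ, c, hc, h⟩ := exists_mulVec_eq_zero hxy hb
    exact ⟨γ, hγ, c, hc, .inr h⟩

end Gamma1

theorem stmt2_general (F : Type*) [Field F] :
    (∀ v : Fin 2 → RatFunc F, v ≠ 0 →
      ∃ γ ∈ Gamma1 F (X : Polynomial F), ∃ l : RatFunc F, l ≠ 0 ∧
        ((γ.map (algebraMap (Polynomial F) (RatFunc F))).mulVec v = ![l, 0] ∨
         (γ.map (algebraMap (Polynomial F) (RatFunc F))).mulVec v = ![0, l])) ∧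
    ¬ (∃ γ ∈ Gamma1 F (X : Polynomial F), ∃ l : RatFunc F, l ≠ 0 ∧
        (γ.map (algebraMap (Polynomial F) (RatFunc F))).mulVec (![1, 0] : Fin 2 → RatFunc F)
          = ![0, l]) := by
  refine ⟨fun v hv => ?_, ?_⟩
  · obtain ⟨s, hs, a, b, hab, rfl⟩ := exists_eq_smul_algebraMap_isCoprime (R := F[X]) v hv
    obtain ⟨γ, hγ, c, hc, hγab⟩ := Gamma1.exists_mulVec_eq_infty_or_zero hab
    refine ⟨γ, hγ, s * algebraMap F[X] (RatFunc F) c,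
      mul_ne_zero hs (RatFunc.algebraMap_ne_zero hc), ?_⟩
    rw [map_mulVec_smul_comp]
    rcases hγab with h | h <;> [left; right] <;>
      · rw [h]; funext i; fin_cases i <;> simp
  · rintro ⟨γ, hγ, l, -, h⟩
    apply Gamma1.apply_zero_zero_ne_zero not_isUnit_X hγ
    simpa using congrFun h 0

theorem stmt2 (p : ℕ) (hp : p.Prime) (F : Type*) [Field F] [Fintype F] [CharP F p] :
    (∀ v : Fin 2 → RatFunc F, v ≠ 0 →
      ∃ γ ∈ Gamma1 F (X : Polynomial F), ∃ l : RatFunc F, l ≠ 0 ∧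
        ((γ.map (algebraMap (Polynomial F) (RatFunc F))).mulVec v = ![l, 0] ∨
         (γ.map (algebraMap (Polynomial F) (RatFunc F))).mulVec v = ![0, l])) ∧
    ¬ (∃ γ ∈ Gamma1 F (X : Polynomial F), ∃ l : RatFunc F, l ≠ 0 ∧
        (γ.map (algebraMap (Polynomial F) (RatFunc F))).mulVec (![1, 0] : Fin 2 → RatFunc F)
          = ![0, l]) :=
  stmt2_general F
end

section
/- Fix an integer n ≥ 1. For every g ∈ Γ₁(t) there exist polynomials c, d ∈ A of degree < n−1 and a standard lift h for (c,d) of level tⁿ such that g·h⁻¹ ∈ Γ₁(tⁿ). Moreover, if c, d, c′, d′ ∈ A all have degree < n−1 and h, h′ are standard lifts for (c,d) and (c′,d′) respectively, then h′·h⁻¹ ∈ Γ₁(tⁿ) if and only if c = c′ and d = d′. In other words, the standard lifts h_{(c,d)} with c, d ranging over polynomials of degree < n−1 form a complete set of representatives of Γ₁(tⁿ)\Γ₁(t). -/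
open Polynomial Matrix

/-- A standard lift `h = h_{(c,d)}` of level `tⁿ`: an element of `SL₂(A)` with
`h₁₂ ≡ 0`, `h₂₁ ≡ tc`, `h₂₂ ≡ 1 + td` and `h₁₁(1+td) ≡ 1 (mod tⁿ)`. -/
def IsStdLift (F : Type*) [Field F] (n : ℕ) (c d : Polynomial F)
    (h : Matrix (Fin 2) (Fin 2) (Polynomial F)) : Prop :=
  h.det = 1 ∧ (X : Polynomial F) ^ n ∣ h 0 1 ∧
    (X : Polynomial F) ^ n ∣ (h 1 0 - X * c) ∧
    (X : Polynomial F) ^ n ∣ (h 1 1 - (1 + X * d)) ∧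
    (X : Polynomial F) ^ n ∣ (h 0 0 * (1 + X * d) - 1)

/-!
For `g, h ∈ SL₂(A)`, the matrix `g h⁻¹` is `≡ [[1,*],[0,1]] (mod 𝔫)` exactly when the bottom rows
of `g` and `h` agree mod `𝔫`: the bottom row of `g h⁻¹` is that of `g` times `h⁻¹`, and its
`(0,0)` entry is then forced by the determinant. A standard lift for `(c,d)` has bottom row
`≡ (tc, 1 + td)`, and an element of `Γ₁(t)` has bottom row `(tc₀, 1 + td₀)`; so the coset of
`g` is that of the standard lift for `(c₀, d₀)` reduced mod `tⁿ⁻¹`, and two standard lifts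
are in the same coset iff `tc ≡ tc'` and `td ≡ td' (mod tⁿ)`, i.e. `c = c'` and `d = d'`
when all degrees are `< n - 1`. Standard lifts exist since `tⁿ` and `1 + td` are coprime.
-/

section TwoByTwo

variable {R : Type*} [CommRing R]

lemma Matrix.inv_fin_two_of_det_eq_one {h : Matrix (Fin 2) (Fin 2) R} (hh : h.det = 1) :
    h⁻¹ = !![h 1 1, -h 0 1; -h 1 0, h 0 0] := by
  rw [inv_def, hh, Ring.inverse_one, one_smul, adjugate_fin_two]

lemma dvd_bottom_row_mul_inv_iff {N : R} {g h : Matrix (Fin 2) (Fin 2) R} (hh : h.det = 1) :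
    (N ∣ (g * h⁻¹) 1 0 ∧ N ∣ (g * h⁻¹) 1 1 - 1) ↔ (N ∣ g 1 0 - h 1 0 ∧ N ∣ g 1 1 - h 1 1) := by
  have hdet : h 0 0 * h 1 1 - h 0 1 * h 1 0 = 1 := by rwa [← det_fin_two]
  simp only [inv_fin_two_of_det_eq_one hh, mul_apply, Fin.sum_univ_two, of_apply, cons_val',
    cons_val_zero, cons_val_one, empty_val', cons_val_fin_one]
  constructor
  · rintro ⟨h10, h11⟩
    constructor
    · convert h10.linear_comb h11 (h 0 0) (h 1 0) using 1
      linear_combination -(g 1 0) * hdet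
    · convert h10.linear_comb h11 (h 0 1) (h 1 1) using 1
      linear_combination -(g 1 1) * hdet
  · rintro ⟨h10, h11⟩
    constructor
    · convert h10.linear_comb h11 (h 1 1) (-h 1 0) using 1
      ring
    · convert h10.linear_comb h11 (-h 0 1) (h 0 0) using 1
      linear_combination hdet

/- The witness is `[[1,0],[w,1]] * [[a,-N],[b,u]]` with `a u + b N = 1` and `w = (r - b) u`. -/
lemma exists_det_eq_one_dvd_of_isCoprime {N u : R} (r : R) (hu : IsCoprime N u) :
    ∃ h : Matrix (Fin 2) (Fin 2) R,
      h.det = 1 ∧ N ∣ h 0 1 ∧ N ∣ h 1 0 - r ∧ N ∣ h 1 1 - u := by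
  obtain ⟨b, a, hab⟩ := hu
  refine ⟨!![a, -N; (r - b) * u * a + b, u - (r - b) * u * N], ?_, ?_, ?_, ?_⟩
  · rw [det_fin_two_of]; linear_combination hab
  · simp
  · exact ⟨-(r - b) * b, by simp only [of_apply, cons_val', cons_val_zero, cons_val_one,
      empty_val', cons_val_fin_one]; linear_combination (r - b) * hab⟩
  · exact ⟨-(r - b) * u, by simp; ring⟩

end TwoByTwo

section Polynomial

variable {R : Type*} [CommRing R]

lemma Polynomial.X_pow_dvd_X_mul_iff {n : ℕ} {p : R[X]} : X ^ n ∣ X * p ↔ X ^ (n - 1) ∣ p := by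
  cases n with
  | zero => simp
  | succ m => rw [pow_succ', Nat.add_sub_cancel, isRegular_X.left.dvd_cancel_left]

variable [Nontrivial R]

lemma Polynomial.exists_degree_lt_X_pow_dvd_sub (m : ℕ) (p : R[X]) :
    ∃ r : R[X], r.degree < m ∧ X ^ m ∣ p - r :=
  ⟨p %ₘ X ^ m, degree_X_pow (R := R) m ▸ degree_modByMonic_lt p (monic_X_pow m),
    ⟨p /ₘ X ^ m, by rw [modByMonic_eq_sub_mul_div, sub_sub_cancel]⟩⟩

lemma Polynomial.X_pow_dvd_sub_iff {m : ℕ} {p q : R[X]} (hp : p.degree < m) (hq : q.degree < m) :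
    X ^ m ∣ p - q ↔ p = q := by
  refine ⟨fun hdvd => sub_eq_zero.1 ?_, fun hpq => by rw [hpq, sub_self]; exact dvd_zero _⟩
  by_contra hne
  refine (monic_X_pow m).not_dvd_of_degree_lt hne ?_ hdvd
  rw [degree_X_pow]
  exact (degree_sub_le p q).trans_lt (max_lt hp hq)

end Polynomial

section Gamma1

variable {F : Type*} [Field F]

lemma mem_Gamma1_iff {N : F[X]} {γ : Matrix (Fin 2) (Fin 2) F[X]} :
    γ ∈ Gamma1 F N ↔ γ.det = 1 ∧ N ∣ γ 1 0 ∧ N ∣ γ 1 1 - 1 := by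
  refine ⟨fun ⟨hdet, h10, _, h11⟩ => ⟨hdet, h10, h11⟩,
    fun ⟨hdet, h10, h11⟩ => ⟨hdet, h10, ?_, h11⟩⟩
  rw [det_fin_two] at hdet
  convert h11.linear_comb h10 (-γ 0 0) (γ 0 1) using 1
  linear_combination hdet

lemma mul_inv_mem_Gamma1_iff {N : F[X]} {g h : Matrix (Fin 2) (Fin 2) F[X]}
    (hg : g.det = 1) (hh : h.det = 1) :
    g * h⁻¹ ∈ Gamma1 F N ↔ N ∣ g 1 0 - h 1 0 ∧ N ∣ g 1 1 - h 1 1 := by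
  rw [mem_Gamma1_iff, det_mul, det_nonsing_inv, hg, hh, Ring.inverse_one, mul_one,
    ← dvd_bottom_row_mul_inv_iff hh, eq_self, true_and]

lemma exists_isStdLift (n : ℕ) (c d : F[X]) : ∃ h, IsStdLift F n c d h := by
  have hcop : IsCoprime ((X : F[X]) ^ n) (1 + X * d) := IsCoprime.pow_left ⟨-d, 1, by ring⟩
  obtain ⟨h, hdet, h01, h10, h11⟩ := exists_det_eq_one_dvd_of_isCoprime (X * c) hcop
  refine ⟨h, hdet, h01, h10, h11, ?_⟩
  rw [det_fin_two] at hdet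
  convert h11.linear_comb h01 (-h 0 0) (h 1 0) using 1
  linear_combination hdet

namespace IsStdLift

variable {n : ℕ} {c d c' d' : F[X]} {g h h' : Matrix (Fin 2) (Fin 2) F[X]}

lemma mul_inv_mem_Gamma1_iff (hh : IsStdLift F n c d h) (hg : g.det = 1) :
    g * h⁻¹ ∈ Gamma1 F (X ^ n) ↔ X ^ n ∣ g 1 0 - X * c ∧ X ^ n ∣ g 1 1 - (1 + X * d) := by
  rw [_root_.mul_inv_mem_Gamma1_iff hg hh.1, ← sub_sub_sub_cancel_right (g 1 0) _ (X * c),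
    ← sub_sub_sub_cancel_right (g 1 1) _ (1 + X * d), dvd_sub_left hh.2.2.1,
    dvd_sub_left hh.2.2.2.1]

lemma mul_inv_mem_Gamma1_iff_of_isStdLift (hh : IsStdLift F n c d h)
    (hh' : IsStdLift F n c' d' h') :
    h' * h⁻¹ ∈ Gamma1 F (X ^ n) ↔ X ^ n ∣ X * (c' - c) ∧ X ^ n ∣ X * (d' - d) := by
  rw [hh.mul_inv_mem_Gamma1_iff hh'.1,
    show h' 1 0 - X * c = h' 1 0 - X * c' + X * (c' - c) by ring,
    show h' 1 1 - (1 + X * d) = h' 1 1 - (1 + X * d') + X * (d' - d) by ring,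
    dvd_add_right hh'.2.2.1, dvd_add_right hh'.2.2.2.1]

end IsStdLift

end Gamma1

theorem stmt4_general (F : Type*) [Field F] (n : ℕ) :
    (∀ g ∈ Gamma1 F (X : Polynomial F),
      ∃ c d : Polynomial F, c.degree < ((n - 1 : ℕ) : WithBot ℕ) ∧
        d.degree < ((n - 1 : ℕ) : WithBot ℕ) ∧
        ∃ h : Matrix (Fin 2) (Fin 2) (Polynomial F),
          IsStdLift F n c d h ∧ g * h⁻¹ ∈ Gamma1 F ((X : Polynomial F) ^ n)) ∧
    (∀ c d c' d' : Polynomial F, ∀ h h' : Matrix (Fin 2) (Fin 2) (Polynomial F),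
      c.degree < ((n - 1 : ℕ) : WithBot ℕ) → d.degree < ((n - 1 : ℕ) : WithBot ℕ) →
      c'.degree < ((n - 1 : ℕ) : WithBot ℕ) → d'.degree < ((n - 1 : ℕ) : WithBot ℕ) →
      IsStdLift F n c d h → IsStdLift F n c' d' h' →
      (h' * h⁻¹ ∈ Gamma1 F ((X : Polynomial F) ^ n) ↔ c = c' ∧ d = d')) := by
  refine ⟨?_, fun c d c' d' h h' hc hd hc' hd' hh hh' => ?_⟩
  · rintro g ⟨hdet, ⟨c₀, hc₀⟩, -, ⟨d₀, hd₀⟩⟩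
    obtain ⟨c, hc, hc₀c⟩ := exists_degree_lt_X_pow_dvd_sub (n - 1) c₀
    obtain ⟨d, hd, hd₀d⟩ := exists_degree_lt_X_pow_dvd_sub (n - 1) d₀
    obtain ⟨h, hh⟩ := exists_isStdLift n c d
    refine ⟨c, d, hc, hd, h, hh, (hh.mul_inv_mem_Gamma1_iff hdet).2 ⟨?_, ?_⟩⟩
    · rwa [hc₀, ← mul_sub, X_pow_dvd_X_mul_iff]
    · rwa [← sub_sub, hd₀, ← mul_sub, X_pow_dvd_X_mul_iff]
  · rw [hh.mul_inv_mem_Gamma1_iff_of_isStdLift hh', X_pow_dvd_X_mul_iff, X_pow_dvd_X_mul_iff,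
      X_pow_dvd_sub_iff hc' hc, X_pow_dvd_sub_iff hd' hd, eq_comm, @eq_comm _ d']

theorem stmt4 (p : ℕ) (hp : p.Prime) (F : Type*) [Field F] [Fintype F] [CharP F p]
    (n : ℕ) (hn : 1 ≤ n) :
    (∀ g ∈ Gamma1 F (X : Polynomial F),
      ∃ c d : Polynomial F, c.degree < ((n - 1 : ℕ) : WithBot ℕ) ∧
        d.degree < ((n - 1 : ℕ) : WithBot ℕ) ∧
        ∃ h : Matrix (Fin 2) (Fin 2) (Polynomial F),
          IsStdLift F n c d h ∧ g * h⁻¹ ∈ Gamma1 F ((X : Polynomial F) ^ n)) ∧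
    (∀ c d c' d' : Polynomial F, ∀ h h' : Matrix (Fin 2) (Fin 2) (Polynomial F),
      c.degree < ((n - 1 : ℕ) : WithBot ℕ) → d.degree < ((n - 1 : ℕ) : WithBot ℕ) →
      c'.degree < ((n - 1 : ℕ) : WithBot ℕ) → d'.degree < ((n - 1 : ℕ) : WithBot ℕ) →
      IsStdLift F n c d h → IsStdLift F n c' d' h' →
      (h' * h⁻¹ ∈ Gamma1 F ((X : Polynomial F) ^ n) ↔ c = c' ∧ d = d')) :=
  stmt4_general F n
end

section
/- Fix an integer n ≥ 1, let c, d ∈ A and let m = min(v_t(c), n−1), where v_t(c) is the multiplicity of t in c (with the convention m = n−1 when c = 0). Let h be a standard lift for (c,d) of level tⁿ. Then for every x ∈ A, the matrix h·[[1,x],[0,1]]·h⁻¹ lies in Γ₁(tⁿ) if and only if t^{n−1−m} divides x. -/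
open Polynomial Matrix

/-!
Since `det h = 1`, conjugating `[[1,x],[0,1]]` by `h = [[a,b],[c',d']]` gives
`[[1 - a c' x, a² x], [-c'² x, 1 + a c' x]]`, so membership in `Γ₁(tⁿ)` means that `tⁿ` divides
`c'² x` and `a c' x`. As `a` is a unit modulo `tⁿ`, this is `tⁿ ∣ c' x`, i.e. `tⁿ ∣ t c x`,
i.e. `tⁿ⁻¹ ∣ c x`; writing `c = t^v u` with `t ∤ u` turns this into `t^(n-1-v) ∣ x`.
-/

section Divisibility

variable {R : Type*} [CommRing R]

theorem dvd_mul_iff_of_dvd_mul_sub_one {N a b y : R} (hab : N ∣ a * b - 1) :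
    N ∣ a * y ↔ N ∣ y := by
  refine ⟨fun hay => ?_, fun hy => hy.mul_left a⟩
  have : y = b * (a * y) - (a * b - 1) * y := by ring
  rw [this]
  exact dvd_sub (hay.mul_left b) (hab.mul_right y)

theorem dvd_mul_iff_of_dvd_sub {N a b y : R} (hab : N ∣ a - b) : N ∣ a * y ↔ N ∣ b * y := by
  rw [show a * y = (a - b) * y + b * y by ring, dvd_add_right (hab.mul_right y)]

end Divisibility

theorem Prime.pow_dvd_pow_mul_mul_iff {M : Type*} [CommMonoidWithZero M] [IsCancelMulZero M]
    {π u : M} (hπ : Prime π) (hu : ¬π ∣ u) (k v : ℕ) (x : M) :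
    π ^ k ∣ π ^ v * u * x ↔ π ^ (k - v) ∣ x := by
  rcases le_total k v with hkv | hvk
  · simpa [Nat.sub_eq_zero_of_le hkv, mul_assoc] using (pow_dvd_pow π hkv).mul_right (u * x)
  · rw [← Nat.add_sub_cancel' hvk, pow_add, Nat.add_sub_cancel_left, mul_assoc,
      mul_dvd_mul_iff_left (pow_ne_zero v hπ.ne_zero)]
    exact ⟨hπ.pow_dvd_of_dvd_mul_left _ hu, fun hx => hx.mul_left u⟩

theorem Polynomial.X_pow_dvd_mul_iff {R : Type*} [CommRing R] [IsDomain R] {c : R[X]}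
    (hc : c ≠ 0) (k : ℕ) (x : R[X]) :
    X ^ k ∣ c * x ↔ X ^ (k - c.rootMultiplicity 0) ∣ x := by
  obtain ⟨u, hcu, hu⟩ := exists_eq_pow_rootMultiplicity_mul_and_not_dvd c hc 0
  simp only [map_zero, sub_zero] at hcu hu
  conv_lhs => rw [hcu]
  exact Prime.pow_dvd_pow_mul_mul_iff prime_X hu k _ x

theorem Matrix.conj_upperUnitriangular_fin_two {R : Type*} [CommRing R]
    {h : Matrix (Fin 2) (Fin 2) R} (hdet : h.det = 1) (x : R) :
    h * !![1, x; 0, 1] * h⁻¹ =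
      !![1 - h 0 0 * h 1 0 * x, h 0 0 ^ 2 * x; -(h 1 0 ^ 2 * x), 1 + h 0 0 * h 1 0 * x] := by
  have hdet' : h 0 0 * h 1 1 - h 0 1 * h 1 0 = 1 := by rw [← det_fin_two, hdet]
  rw [inv_def, adjugate_fin_two, hdet, Ring.inverse_one, one_smul, eta_fin_two h, mul_fin_two,
    mul_fin_two]
  ext i j
  fin_cases i <;> fin_cases j <;> simp
  · linear_combination hdet'
  · ring
  · ring
  · linear_combination hdet'

theorem conj_upperUnitriangular_mem_Gamma1_iff {F : Type*} [Field F] {N : F[X]}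
    {h : Matrix (Fin 2) (Fin 2) F[X]} (hdet : h.det = 1) (x : F[X]) :
    h * !![1, x; 0, 1] * h⁻¹ ∈ Gamma1 F N ↔ N ∣ h 1 0 ^ 2 * x ∧ N ∣ h 0 0 * h 1 0 * x := by
  have hconj_det : (h * !![1, x; 0, 1] * h⁻¹).det = 1 := by
    simp [det_nonsing_inv, hdet]
  rw [conj_upperUnitriangular_fin_two hdet] at hconj_det ⊢
  simp [Gamma1, hconj_det]

open scoped Classical in
theorem stmt8_general (F : Type*) [Field F]
    (n : ℕ) (hn : 1 ≤ n) (c d : Polynomial F) (m : ℕ)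
    (hm : m = if c = 0 then n - 1 else min (Polynomial.rootMultiplicity 0 c) (n - 1))
    (h : Matrix (Fin 2) (Fin 2) (Polynomial F)) (hh : IsStdLift F n c d h) :
    ∀ x : Polynomial F,
      h * !![1, x; 0, 1] * h⁻¹ ∈ Gamma1 F ((X : Polynomial F) ^ n) ↔
        (X : Polynomial F) ^ (n - 1 - m) ∣ x := by
  intro x
  obtain ⟨hdet, -, hc, -, ha⟩ := hh
  obtain ⟨k, rfl⟩ : ∃ k, n = k + 1 := ⟨n - 1, by omega⟩
  rw [Nat.add_sub_cancel] at hm ⊢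
  have hmem : h * !![1, x; 0, 1] * h⁻¹ ∈ Gamma1 F (X ^ (k + 1)) ↔ X ^ (k + 1) ∣ h 1 0 * x := by
    rw [conj_upperUnitriangular_mem_Gamma1_iff hdet, mul_assoc,
      dvd_mul_iff_of_dvd_mul_sub_one ha, pow_two, mul_assoc]
    exact and_iff_right_of_imp (·.mul_left _)
  rw [hmem, dvd_mul_iff_of_dvd_sub hc, mul_assoc, pow_succ', mul_dvd_mul_iff_left X_ne_zero]
  by_cases hc0 : c = 0
  · simp [hc0, hm]
  · rw [if_neg hc0] at hm
    rw [X_pow_dvd_mul_iff hc0, hm, min_comm, tsub_min]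

open scoped Classical in
theorem stmt8 (p : ℕ) (hp : p.Prime) (F : Type*) [Field F] [Fintype F] [CharP F p]
    (n : ℕ) (hn : 1 ≤ n) (c d : Polynomial F) (m : ℕ)
    (hm : m = if c = 0 then n - 1 else min (Polynomial.rootMultiplicity 0 c) (n - 1))
    (h : Matrix (Fin 2) (Fin 2) (Polynomial F)) (hh : IsStdLift F n c d h) :
    ∀ x : Polynomial F,
      h * !![1, x; 0, 1] * h⁻¹ ∈ Gamma1 F ((X : Polynomial F) ^ n) ↔
        (X : Polynomial F) ^ (n - 1 - m) ∣ x :=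
  stmt8_general F n hn c d m hm h hh
end

section
/- Fix an integer n ≥ 1, let d ∈ A and let h be a standard lift for (0,d) of level tⁿ. Put J = [[0,−1],[1,0]]. Then for every x ∈ A, the matrix (hJ)·[[1,x],[0,1]]·(hJ)⁻¹ lies in Γ₁(tⁿ) if and only if tⁿ divides x. -/
open Polynomial Matrix

/-- Conjugation of the unipotent `[[1,x],[0,1]]` by `h·J` computed explicitly. -/
lemma conj_eq (F : Type*) [Field F] (h : Matrix (Fin 2) (Fin 2) (Polynomial F))
    (hdet : h.det = 1) (x : Polynomial F) :
    (h * !![0, -1; 1, 0]) * !![1, x; 0, 1] * (h * !![0, -1; 1, 0])⁻¹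
      = !![1 - h 0 1 * h 1 1 * x, h 0 1 * h 0 1 * x;
           -(h 1 1 * h 1 1 * x), 1 + h 0 1 * h 1 1 * x] := by
  have hdet2 : h 0 0 * h 1 1 - h 0 1 * h 1 0 = 1 := by rw [← Matrix.det_fin_two]; exact hdet
  have hg : (h * !![0, -1; 1, 0]).det = 1 := by
    rw [Matrix.det_mul, hdet, Matrix.det_fin_two_of]; ring
  rw [Matrix.inv_def, hg, Matrix.adjugate_fin_two]
  apply Matrix.ext
  intro i j
  fin_cases i <;> fin_cases j <;>
    simp [Matrix.mul_apply, Fin.sum_univ_succ] <;>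
    first | ring1 | linear_combination hdet2

theorem stmt9 (p : ℕ) (hp : p.Prime) (F : Type*) [Field F] [Fintype F] [CharP F p]
    (n : ℕ) (hn : 1 ≤ n) (d : Polynomial F)
    (h : Matrix (Fin 2) (Fin 2) (Polynomial F)) (hh : IsStdLift F n 0 d h) :
    ∀ x : Polynomial F,
      (h * !![0, -1; 1, 0]) * !![1, x; 0, 1] * (h * !![0, -1; 1, 0])⁻¹ ∈
          Gamma1 F ((X : Polynomial F) ^ n) ↔
        (X : Polynomial F) ^ n ∣ x := by
  obtain ⟨hdet, hb, hc, he, ha⟩ := hh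
  intro x
  rw [conj_eq F h hdet x]
  have hdet3 : (!![1 - h 0 1 * h 1 1 * x, h 0 1 * h 0 1 * x;
      -(h 1 1 * h 1 1 * x), 1 + h 0 1 * h 1 1 * x]).det = 1 := by
    rw [Matrix.det_fin_two_of]; ring
  have hXe : ¬ (X : Polynomial F) ∣ h 1 1 := by
    intro hdvd
    have h1 : (X : Polynomial F) ∣ h 1 1 - (1 + X * d) :=
      dvd_trans (dvd_pow_self X (Nat.one_le_iff_ne_zero.mp hn)) he
    have h2 : (X : Polynomial F) ∣ 1 + X * d := by
      have := dvd_sub hdvd h1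
      simpa using this
    have h3 : (X : Polynomial F) ∣ 1 := by
      have := dvd_sub h2 (Dvd.intro d rfl)
      simpa using this
    exact Polynomial.prime_X.not_dvd_one h3
  have hcop : IsCoprime ((X : Polynomial F) ^ n) (h 1 1 * h 1 1) :=
    (((Polynomial.prime_X.coprime_iff_not_dvd).mpr hXe).mul_right
      ((Polynomial.prime_X.coprime_iff_not_dvd).mpr hXe)).pow_left
  constructor
  · rintro ⟨-, h10, -, -⟩
    simp only [Matrix.cons_val', Matrix.cons_val_zero, Matrix.cons_val_one, Matrix.head_cons,
      Matrix.empty_val', Matrix.cons_val_fin_one, Matrix.head_fin_const, Matrix.of_apply,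
      dvd_neg] at h10
    exact hcop.dvd_of_dvd_mul_left (by rw [mul_comm]; rwa [mul_comm (h 1 1 * h 1 1)] at h10)
  · intro hx
    refine ⟨hdet3, ?_, ?_, ?_⟩ <;>
      simp only [Matrix.cons_val', Matrix.cons_val_zero, Matrix.cons_val_one, Matrix.head_cons,
        Matrix.empty_val', Matrix.cons_val_fin_one, Matrix.head_fin_const, Matrix.of_apply,
        dvd_neg]
    · exact Dvd.dvd.mul_left hx _
    · rw [show 1 - h 0 1 * h 1 1 * x - 1 = -(h 0 1 * h 1 1 * x) by ring]
      exact dvd_neg.mpr (Dvd.dvd.mul_left hx _)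
    · rw [show 1 + h 0 1 * h 1 1 * x - 1 = h 0 1 * h 1 1 * x by ring]
      exact Dvd.dvd.mul_left hx _
end

section
/- Fix an integer n ≥ 1, let β ∈ 𝔽_q and c, d ∈ A. Put ξ_β = [[1,β],[0,t]] ∈ M₂(A). Let h be a standard lift for (c,d) of level tⁿ and h′ a standard lift for (tc, d−βc) of level tⁿ. Then there exists γ ∈ Γ₁(tⁿ) such that ξ_β·h = γ·h′·ξ_β as 2×2 matrices over A. -/
open Polynomial Matrix

theorem stmt10 (p : ℕ) (hp : p.Prime) (F : Type*) [Field F] [Fintype F] [CharP F p]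
    (n : ℕ) (hn : 1 ≤ n) (β : F) (c d : Polynomial F)
    (h h' : Matrix (Fin 2) (Fin 2) (Polynomial F))
    (hh : IsStdLift F n c d h) (hh' : IsStdLift F n (X * c) (d - C β * c) h') :
    ∃ γ ∈ Gamma1 F ((X : Polynomial F) ^ n),
      !![1, C β; 0, X] * h = γ * h' * !![1, C β; 0, X] := by
  obtain ⟨hdet, hb, hc, he, ha⟩ := hh
  obtain ⟨hdet', hb', hc', he', ha'⟩ := hh'
  obtain ⟨m, rfl⟩ : ∃ m, n = m + 1 := ⟨n - 1, by omega⟩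
  obtain ⟨b0, hb⟩ := hb
  obtain ⟨c0, hc⟩ := hc
  obtain ⟨e0, he⟩ := he
  obtain ⟨a0, ha⟩ := ha
  obtain ⟨b0', hb'⟩ := hb'
  obtain ⟨c0', hc'⟩ := hc'
  obtain ⟨e0', he'⟩ := he'
  obtain ⟨a0', ha'⟩ := ha'
  rw [Matrix.det_fin_two] at hdet hdet'
  -- rearranged substitution equations
  have hb2 : h 0 1 = X ^ (m+1) * b0 := by linear_combination hb
  have hc2 : h 1 0 = X * c + X ^ (m+1) * c0 := by linear_combination hc
  have he2 : h 1 1 = 1 + X * d + X ^ (m+1) * e0 := by linear_combination he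
  have hb'2 : h' 0 1 = X ^ (m+1) * b0' := by linear_combination hb'
  have hc'2 : h' 1 0 = X * (X * c) + X ^ (m+1) * c0' := by linear_combination hc'
  have he'2 : h' 1 1 = 1 + X * (d - C β * c) + X ^ (m+1) * e0' := by linear_combination he'
  -- the polynomial k with X*k = b + βe - βa - β²c₁ (in substituted form)
  obtain ⟨k, hk⟩ : ∃ k : Polynomial F,
      X ^ (m+1) * b0 + C β * (1 + X * d + X ^ (m+1) * e0) - C β * h 0 0
        - C β ^ 2 * (X * c + X ^ (m+1) * c0) = X * k :=
    ⟨X ^ m * b0 + C β * (d + X ^ m * e0) - C β * (X ^ m * a0 - h 0 0 * d)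
      - C β ^ 2 * (c + X ^ m * c0), by linear_combination (-(C β)) * ha⟩
  obtain ⟨K, hK⟩ : ∃ K : Matrix (Fin 2) (Fin 2) (Polynomial F),
      K = !![h 0 0 + C β * h 1 0, k; X * h 1 0, h 1 1 - C β * h 1 0] := ⟨_, rfl⟩
  have hγ : K * h'.adjugate =
      !![(h 0 0 + C β * h 1 0) * h' 1 1 - k * h' 1 0,
          -((h 0 0 + C β * h 1 0) * h' 0 1) + k * h' 0 0;
          X * h 1 0 * h' 1 1 - (h 1 1 - C β * h 1 0) * h' 1 0,
          -(X * h 1 0 * h' 0 1) + (h 1 1 - C β * h 1 0) * h' 0 0] := by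
    rw [hK, Matrix.adjugate_fin_two]
    refine Matrix.ext fun i j => ?_
    fin_cases i <;> fin_cases j <;>
      simp only [Matrix.mul_apply, Fin.sum_univ_two, Matrix.cons_val', Matrix.cons_val_zero,
        Matrix.cons_val_one, Matrix.head_cons, Matrix.empty_val', Matrix.cons_val_fin_one,
        Matrix.head_fin_const, Matrix.of_apply, Fin.zero_eta, Fin.mk_one, Fin.isValue] <;> ring
  refine ⟨K * h'.adjugate, ⟨?_, ?_, ?_, ?_⟩, ?_⟩
  · -- determinant 1
    rw [Matrix.det_mul, Matrix.det_adjugate]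
    have hdk : K.det = 1 := by
      rw [hK, Matrix.det_fin_two_of]
      simp only [hb2, hc2, he2] at hdet ⊢
      linear_combination (X * c + X ^ (m+1) * c0) * hk + hdet
    have hd' : h'.det = 1 := by rw [Matrix.det_fin_two]; exact hdet'
    rw [hdk, hd']
    simp
  · -- X^n ∣ γ 1 0
    rw [hγ]
    simp only [Matrix.cons_val', Matrix.cons_val_zero, Matrix.cons_val_one, Matrix.head_cons,
      Matrix.empty_val', Matrix.cons_val_fin_one, Matrix.head_fin_const, Matrix.of_apply, Fin.zero_eta, Fin.mk_one, Fin.isValue]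
    refine ⟨-c0' - X ^ (m+1) * e0 * c0' + X ^ (m+1) * C β * c0 * c0' + X * c0 - X * d * c0'
      + X * C β * c * c0' + X * X ^ (m+1) * c0 * e0' + X ^ 2 * d * c0 + X ^ 2 * c * e0'
      - X ^ 2 * c * e0, ?_⟩
    simp only [hc2, he2, hc'2, he'2]
    ring
  · -- X^n ∣ γ 0 0 - 1
    rw [hγ]
    simp only [Matrix.cons_val', Matrix.cons_val_zero, Matrix.cons_val_one, Matrix.head_cons,
      Matrix.empty_val', Matrix.cons_val_fin_one, Matrix.head_fin_const, Matrix.of_apply, Fin.zero_eta, Fin.mk_one, Fin.isValue]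
    obtain ⟨W3, hW3⟩ : ∃ W3 : Polynomial F, W3 =
        (a0 + h 0 0 * e0' + C β * c0 - C β * d * c0' - C β * h 0 0 * d * c0'
          + C β ^ 2 * c * c0' + X ^ (m+1) * C β * c0 * e0' - X * c * b0 + X * C β * d * c0
          + X * C β * c * e0' - X * C β * c * e0)
        + X ^ m * (-(b0 * c0') + C β * a0 * c0' - C β * e0 * c0' + C β ^ 2 * c0 * c0') :=
      ⟨_, rfl⟩
    refine ⟨W3, ?_⟩
    have hXeq : X * ((h 0 0 + C β * (X * c + X ^ (m+1) * c0))
          * (1 + X * (d - C β * c) + X ^ (m+1) * e0')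
          - k * (X * (X * c) + X ^ (m+1) * c0') - 1) = X * (X ^ (m+1) * W3) := by
      rw [hW3]
      linear_combination (X * (X * c) + X ^ (m+1) * c0') * hk
        + (X + X ^ (m+1) * C β * c0') * ha
    have hcan := mul_left_cancel₀ (Polynomial.X_ne_zero (R := F)) hXeq
    simp only [hc2, he2, hc'2, he'2]
    linear_combination hcan
  · -- X^n ∣ γ 1 1 - 1
    rw [hγ]
    simp only [Matrix.cons_val', Matrix.cons_val_zero, Matrix.cons_val_one, Matrix.head_cons,
      Matrix.empty_val', Matrix.cons_val_fin_one, Matrix.head_fin_const, Matrix.of_apply, Fin.zero_eta, Fin.mk_one, Fin.isValue]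
    refine ⟨a0' + e0 * h' 0 0 - C β * c0 * h' 0 0 - X * X ^ (m+1) * c0 * b0'
      - X ^ 2 * c * b0', ?_⟩
    simp only [hb'2, hc2, he2]
    linear_combination ha'
  · -- the intertwining identity
    have hKh : (K * h'.adjugate) * h' = K := by
      rw [Matrix.mul_assoc, Matrix.adjugate_mul]
      have hd' : h'.det = 1 := by rw [Matrix.det_fin_two]; exact hdet'
      rw [hd', one_smul, mul_one]
    rw [hKh, hK]
    refine Matrix.ext fun i j => ?_
    fin_cases i <;> fin_cases j <;>
      simp only [Matrix.mul_apply, Fin.sum_univ_two, Matrix.cons_val', Matrix.cons_val_zero,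
        Matrix.cons_val_one, Matrix.head_cons, Matrix.empty_val', Matrix.cons_val_fin_one,
        Matrix.head_fin_const, Matrix.of_apply, Fin.zero_eta, Fin.mk_one, Fin.isValue]
    · ring
    · linear_combination hk + hb2 + C β * he2 - C β ^ 2 * hc2
    · ring
    · ring
end

section
/- Fix an integer n ≥ 1, let β ∈ 𝔽_q with β ≠ 0 and c, d ∈ A. Put ξ_β = [[1,β],[0,t]] ∈ M₂(A) and J = [[0,−1],[1,0]]. Let h be a standard lift for (c,d) of level tⁿ and h″ a standard lift for (β⁻¹(1+td), d−βc) of level tⁿ. Then there exists γ ∈ Γ₁(tⁿ) such that ξ_β·h·J = γ·h″·[[1,0],[0,t]]·[[β,−1],[0,β⁻¹]] as 2×2 matrices over A. -/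
open Polynomial Matrix

theorem stmt11 (p : ℕ) (hp : p.Prime) (F : Type*) [Field F] [Fintype F] [CharP F p]
    (n : ℕ) (hn : 1 ≤ n) (β : F) (hβ : β ≠ 0) (c d : Polynomial F)
    (h h'' : Matrix (Fin 2) (Fin 2) (Polynomial F))
    (hh : IsStdLift F n c d h)
    (hh'' : IsStdLift F n (C β⁻¹ * (1 + X * d)) (d - C β * c) h'') :
    ∃ γ ∈ Gamma1 F ((X : Polynomial F) ^ n),
      !![1, C β; 0, X] * h * !![0, -1; 1, 0] =
        γ * h'' * !![1, 0; 0, X] * !![C β, -1; 0, C β⁻¹] := by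
  obtain ⟨m, rfl⟩ : ∃ m, n = m + 1 := ⟨n - 1, (Nat.succ_pred_eq_of_pos hn).symm⟩
  obtain ⟨hdeth, ⟨a, ha⟩, ⟨u, hu⟩, ⟨w, hw⟩, ⟨s, hs⟩⟩ := hh
  obtain ⟨hdet2, ⟨a2, ha2⟩, ⟨u2, hu2⟩, ⟨w2, hw2⟩, ⟨s2, hs2⟩⟩ := hh''
  rw [Matrix.det_fin_two] at hdeth hdet2
  have hb : (C β : Polynomial F) * C β⁻¹ = 1 := by
    rw [← C_mul, mul_inv_cancel₀ hβ, C_1]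
  have hg : h 1 0 = X * c + X ^ (m + 1) * u := by linear_combination hu
  have hk : h 1 1 = 1 + X * d + X ^ (m + 1) * w := by linear_combination hw
  have hg2 : h'' 1 0 = X * (C β⁻¹ * (1 + X * d)) + X ^ (m + 1) * u2 := by
    linear_combination hu2
  have hk2 : h'' 1 1 = 1 + X * (d - C β * c) + X ^ (m + 1) * w2 := by
    linear_combination hw2
  set K : Polynomial F :=
    X ^ m * (a + C β * w - C β * s - C β ^ 2 * u) + C β * d + C β * d * (h 0 0)
      - C β ^ 2 * c with hKdef
  have hK : X * K = h 0 1 + C β * h 1 1 - C β * h 0 0 - C β ^ 2 * h 1 0 := by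
    rw [hKdef]; linear_combination C β * hs - ha - C β * hk + C β ^ 2 * hg
  refine ⟨!![C β⁻¹ * (h 0 1 + C β * h 1 1) * h'' 1 1 - K * h'' 1 0,
             -(C β⁻¹) * (h 0 1 + C β * h 1 1) * h'' 0 1 + K * h'' 0 0;
             C β⁻¹ * X * h 1 1 * h'' 1 1 - (h 1 1 - C β * h 1 0) * h'' 1 0,
             -(C β⁻¹) * X * h 1 1 * h'' 0 1 + (h 1 1 - C β * h 1 0) * h'' 0 0],
         ⟨?_, ?_, ?_, ?_⟩, ?_⟩
  · -- determinant 1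
    rw [Matrix.det_fin_two_of]
    linear_combination
      (C β⁻¹ * ((h 0 1 + C β * h 1 1) * (h 1 1 - C β * h 1 0) - X * K * h 1 1)) * hdet2
        + (-(C β⁻¹) * h 1 1) * hK + (C β⁻¹ * C β) * hdeth + hb
  · -- X^n ∣ γ 1 0
    simp only [Fin.isValue, Matrix.of_apply, Matrix.cons_val', Matrix.cons_val_zero,
      Matrix.empty_val', Matrix.cons_val_fin_one, Matrix.cons_val_one, Matrix.head_fin_const,
      Matrix.head_cons]
    refine ⟨C β⁻¹ * X * ((1 + X * d) * w2 + w * (1 + X * (d - C β * c))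
        + X ^ (m + 1) * w * w2 - (w - C β * u) * (1 + X * d))
        - (1 + X * (d - C β * c)) * u2 - X ^ (m + 1) * (w - C β * u) * u2, ?_⟩
    linear_combination (C β⁻¹ * X * h 1 1) * hk2 + (-(h 1 1 - C β * h 1 0)) * hg2
      + (C β⁻¹ * X * (1 + X * (d - C β * c) + X ^ (m + 1) * w2)
          - (X * (C β⁻¹ * (1 + X * d)) + X ^ (m + 1) * u2)) * hk
      + (C β * (X * (C β⁻¹ * (1 + X * d)) + X ^ (m + 1) * u2)) * hg
  · -- X^n ∣ γ 0 0 - 1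
    simp only [Fin.isValue, Matrix.of_apply, Matrix.cons_val', Matrix.cons_val_zero,
      Matrix.empty_val', Matrix.cons_val_fin_one, Matrix.cons_val_one, Matrix.head_fin_const,
      Matrix.head_cons]
    refine ⟨C β⁻¹ * a * (1 + X * (d - C β * c)) + (1 + X * d) * w2
        + w * (1 + X * (d - C β * c)) + X ^ (m + 1) * w * w2
        + X ^ (m + 1) * C β⁻¹ * a * w2 - C β⁻¹ * (1 + X * d) * a - (1 + X * d) * w
        + (1 + X * d) * s + C β * (1 + X * d) * u
        - X ^ m * u2 * (a + C β * w - C β * s - C β ^ 2 * u) + C β ^ 2 * c * u2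
        - C β * d * u2 - X * d * s - C β * d * (h 0 0) * u2, ?_⟩
    linear_combination (C β⁻¹ * (h 0 1 + C β * h 1 1)) * hk2 + (-K) * hg2
      + (C β⁻¹ * (1 + X * (d - C β * c) + X ^ (m + 1) * w2)) * ha
      + (C β⁻¹ * C β * (1 + X * (d - C β * c) + X ^ (m + 1) * w2)) * hk
      + ((1 + X * d) * (1 + X * (d - C β * c)) + X ^ (m + 1) * (1 + X * d) * w2
          + X ^ (m + 1) * w * (1 + X * (d - C β * c))
          + X ^ (m + 1) * X ^ (m + 1) * w * w2 - X ^ (m + 1) * w * (1 + X * d)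
          + X ^ (m + 1) * s * (1 + X * d) + C β * X ^ (m + 1) * u * (1 + X * d)
          - X * d * (1 + X * d) - X * d * (h 0 0) * (1 + X * d)
          + C β * X * c * (1 + X * d)) * hb
      + (-(X * d)) * hs
  · -- X^n ∣ γ 1 1 - 1
    simp only [Fin.isValue, Matrix.of_apply, Matrix.cons_val', Matrix.cons_val_zero,
      Matrix.empty_val', Matrix.cons_val_fin_one, Matrix.cons_val_one, Matrix.head_fin_const,
      Matrix.head_cons]
    refine ⟨-(C β⁻¹) * X * h 1 1 * a2 + s2 + (w - C β * u) * h'' 0 0, ?_⟩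
    linear_combination (-(C β⁻¹) * X * h 1 1) * ha2 + (h'' 0 0) * hk
      + (-(C β) * h'' 0 0) * hg + hs2
  · -- the matrix identity
    rw [← Matrix.ext_iff]
    intro i j
    fin_cases i <;> fin_cases j <;>
      simp only [Fin.zero_eta, Fin.mk_one, Matrix.mul_apply, Fin.sum_univ_two, Fin.isValue,
        Matrix.of_apply, Matrix.cons_val', Matrix.cons_val_zero, Matrix.empty_val',
        Matrix.cons_val_fin_one, Matrix.cons_val_one, Matrix.head_fin_const, Matrix.head_cons]
    · linear_combination (-(C β * C β⁻¹ * (h 0 1 + C β * h 1 1))) * hdet2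
        + (-(h 0 1 + C β * h 1 1)) * hb
    · linear_combination (C β⁻¹ * ((h 0 1 + C β * h 1 1) - X * K)) * hdet2
        - (-(h 0 0 + C β * h 1 0)) * hb - C β⁻¹ * hK
    · linear_combination (-(X * h 1 1 * C β * C β⁻¹)) * hdet2 + (-(X * h 1 1)) * hb
    · linear_combination (C β⁻¹ * C β * X * h 1 0) * hdet2 + X * h 1 0 * hb
end

section
/- Fix an integer n ≥ 1 and let c, d ∈ A. Put ξ₀ = [[1,0],[0,t]] ∈ M₂(A) and J = [[0,−1],[1,0]]. Let h be a standard lift for (c,d) of level tⁿ and h′ a standard lift for (tc, d) of level tⁿ. Then there exists γ ∈ Γ₁(tⁿ) such that ξ₀·h·J = γ·h′·J·[[t,0],[0,1]] as 2×2 matrices over A. -/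
open Polynomial Matrix

theorem stmt12 (p : ℕ) (hp : p.Prime) (F : Type*) [Field F] [Fintype F] [CharP F p]
    (n : ℕ) (hn : 1 ≤ n) (c d : Polynomial F)
    (h h' : Matrix (Fin 2) (Fin 2) (Polynomial F))
    (hh : IsStdLift F n c d h) (hh' : IsStdLift F n (X * c) d h') :
    ∃ γ ∈ Gamma1 F ((X : Polynomial F) ^ n),
      !![1, 0; 0, X] * h * !![0, -1; 1, 0] =
        γ * h' * !![0, -1; 1, 0] * !![X, 0; 0, 1] := by
  obtain ⟨m, rfl⟩ := Nat.exists_eq_add_of_le hn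
  obtain ⟨Hdet, ⟨b1, hb⟩, hu, hv, hw⟩ := hh
  obtain ⟨Hdet', hb', hu', hv', hw'⟩ := hh'
  have detH : h 0 0 * h 1 1 - h 0 1 * h 1 0 = 1 := by
    rw [← Matrix.det_fin_two]; exact Hdet
  have detH' : h' 0 0 * h' 1 1 - h' 0 1 * h' 1 0 = 1 := by
    rw [← Matrix.det_fin_two]; exact Hdet'
  refine ⟨!![h 0 0 * h' 1 1 - X ^ m * b1 * h' 1 0,
            X ^ m * b1 * h' 0 0 - h 0 0 * h' 0 1;
            X * h 1 0 * h' 1 1 - h 1 1 * h' 1 0,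
            h 1 1 * h' 0 0 - X * h 1 0 * h' 0 1], ⟨?_, ?_, ?_, ?_⟩, ?_⟩
  · rw [Matrix.det_fin_two]
    simp only [Matrix.cons_val', Matrix.cons_val_zero, Matrix.cons_val_one, Matrix.head_cons,
      Matrix.empty_val', Matrix.cons_val_fin_one, Matrix.head_fin_const, Matrix.of_apply]
    linear_combination (h' 0 0 * h' 1 1 - h' 0 1 * h' 1 0) * detH +
      (h' 0 0 * h' 1 1 - h' 0 1 * h' 1 0) * (h 1 0) * hb + detH'
  · show (X : Polynomial F) ^ (1 + m) ∣ (X * h 1 0 * h' 1 1 - h 1 1 * h' 1 0)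
    have key : X * h 1 0 * h' 1 1 - h 1 1 * h' 1 0 =
        X * h' 1 1 * (h 1 0 - X * c) - h 1 1 * (h' 1 0 - X * (X * c)) +
          X * X * c * ((h' 1 1 - (1 + X * d)) - (h 1 1 - (1 + X * d))) := by ring
    rw [key]
    exact dvd_add (dvd_sub (hu.mul_left _) (hu'.mul_left _)) ((dvd_sub hv' hv).mul_left _)
  · show (X : Polynomial F) ^ (1 + m) ∣ (h 0 0 * h' 1 1 - X ^ m * b1 * h' 1 0 - 1)
    have key : h 0 0 * h' 1 1 - X ^ m * b1 * h' 1 0 - 1 =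
        h 0 0 * (h' 1 1 - (1 + X * d)) + (h 0 0 * (1 + X * d) - 1) -
          X ^ m * b1 * (h' 1 0 - X * (X * c)) - X ^ (1 + m) * (X * b1 * c) := by ring
    rw [key]
    exact dvd_sub (dvd_sub (dvd_add (hv'.mul_left _) hw) (hu'.mul_left _)) (dvd_mul_right _ _)
  · show (X : Polynomial F) ^ (1 + m) ∣ (h 1 1 * h' 0 0 - X * h 1 0 * h' 0 1 - 1)
    have key : h 1 1 * h' 0 0 - X * h 1 0 * h' 0 1 - 1 =
        h' 0 0 * (h 1 1 - (1 + X * d)) + (h' 0 0 * (1 + X * d) - 1) -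
          X * h 1 0 * h' 0 1 := by ring
    rw [key]
    exact dvd_sub (dvd_add (hv.mul_left _) hw') (hb'.mul_left _)
  · rw [← Matrix.ext_iff]
    intro i j
    fin_cases i <;> fin_cases j <;>
      simp [Matrix.mul_apply, Matrix.vecMul, dotProduct, Fin.sum_univ_succ]
    · linear_combination hb - X ^ (1 + m) * b1 * detH'
    · linear_combination (h 0 0) * detH'
    · linear_combination - X * (h 1 1) * detH'
    · linear_combination X * (h 1 0) * detH'
end

section
/- Fix an integer n ≥ 1 and let a, c, d ∈ A. Let 𝔞 ∈ A satisfy 𝔞 ≡ 1+ta (mod tⁿ) and let η ∈ SL₂(A) satisfy η₂₁ ≡ 0 (mod tⁿ) and η₂₂ ≡ 𝔞 (mod tⁿ). Let h be a standard lift for (c,d) of level tⁿ and h′ a standard lift for ((1+ta)c, a+d+tad) of level tⁿ. Then there exists γ ∈ Γ₁(tⁿ) such that η·h = γ·h′. -/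
open Polynomial Matrix

theorem stmt13 (p : ℕ) (hp : p.Prime) (F : Type*) [Field F] [Fintype F] [CharP F p]
    (n : ℕ) (hn : 1 ≤ n) (a c d 𝔞 : Polynomial F)
    (h𝔞 : (X : Polynomial F) ^ n ∣ (𝔞 - (1 + X * a)))
    (η : Matrix (Fin 2) (Fin 2) (Polynomial F)) (hη : η.det = 1)
    (hη21 : (X : Polynomial F) ^ n ∣ η 1 0)
    (hη22 : (X : Polynomial F) ^ n ∣ (η 1 1 - 𝔞))
    (h h' : Matrix (Fin 2) (Fin 2) (Polynomial F))
    (hh : IsStdLift F n c d h)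
    (hh' : IsStdLift F n ((1 + X * a) * c) (a + d + X * a * d) h') :
    ∃ γ ∈ Gamma1 F ((X : Polynomial F) ^ n), η * h = γ * h' := by
  obtain ⟨hdet, h01, h10, h11, h00⟩ := hh
  obtain ⟨hdet', h01', h10', h11', h00'⟩ := hh'
  set I := Ideal.span {(X : Polynomial F) ^ n} with hI
  set π := Ideal.Quotient.mk I with hπ
  have key : ∀ b : Polynomial F, (X : Polynomial F) ^ n ∣ b ↔ π b = 0 := by
    intro b
    rw [hπ, Ideal.Quotient.eq_zero_iff_mem, hI, Ideal.mem_span_singleton]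
  rw [Matrix.det_fin_two] at hη
  have E8 := congrArg π hη
  simp only [map_sub, _root_.map_mul, _root_.map_one] at E8
  rw [key] at h𝔞 hη21 hη22 h01 h10 h11 h00 h01' h10' h11' h00'
  simp only [map_sub, map_add, _root_.map_mul, _root_.map_one, sub_eq_zero]
    at h𝔞 hη22 h10 h11 h00 h10' h11' h00'
  rw [hη21, hη22, h𝔞] at E8
  refine ⟨η * h * h'.adjugate, ⟨?_, ?_, ?_, ?_⟩, ?_⟩
  · simp [Matrix.det_mul, Matrix.det_adjugate, hdet, hdet', Matrix.det_fin_two, hη]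
  · rw [key]
    simp only [Matrix.mul_apply, Fin.sum_univ_two, Matrix.adjugate_fin_two,
      Matrix.of_apply, Matrix.cons_val', Matrix.cons_val_zero, Matrix.cons_val_one,
      Matrix.head_cons, Matrix.vecHead, Matrix.empty_val', Matrix.cons_val_fin_one,
      map_add, _root_.map_mul, map_sub, map_neg, _root_.map_one]
    rw [hη21, hη22, h𝔞, h10, h11, h10', h11', h01]
    ring
  · rw [key]
    simp only [Matrix.mul_apply, Fin.sum_univ_two, Matrix.adjugate_fin_two,
      Matrix.of_apply, Matrix.cons_val', Matrix.cons_val_zero, Matrix.cons_val_one,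
      Matrix.head_cons, Matrix.vecHead, Matrix.empty_val', Matrix.cons_val_fin_one,
      map_add, _root_.map_mul, map_sub, map_neg, _root_.map_one]
    rw [h10, h11, h10', h11', h01]
    linear_combination (π (h 0 0) * (1 + π X * π d)) * E8 + h00
  · rw [key]
    simp only [Matrix.mul_apply, Fin.sum_univ_two, Matrix.adjugate_fin_two,
      Matrix.of_apply, Matrix.cons_val', Matrix.cons_val_zero, Matrix.cons_val_one,
      Matrix.head_cons, Matrix.vecHead, Matrix.empty_val', Matrix.cons_val_fin_one,
      map_add, _root_.map_mul, map_sub, map_neg, _root_.map_one]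
    rw [hη21, hη22, h𝔞, h10, h11, h01, h01']
    linear_combination h00'
  · rw [Matrix.mul_assoc, Matrix.mul_assoc, Matrix.adjugate_mul, hdet', one_smul, Matrix.mul_one]
end

section
/- Fix an integer n ≥ 1, let R = 𝔽_q[t]/(t^{n−1}) and let τ ∈ R be the image of t, so that 1+τa is a unit of R for every a ∈ R. For any fixed c, d ∈ R, the map R → R × R sending a to ((1+τa)⁻¹·c, (1+τa)⁻¹·(d−a)) is injective; in particular its image, the orbit of (c,d) under the diamond action of the group 1+tA/tⁿA, has exactly q^{n−1} elements. -/
open Polynomial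

theorem isUnit_one_add_mul_of_isNilpotent {R : Type*} [CommRing R] {τ : R} (hτ : IsNilpotent τ)
    (a : R) : IsUnit (1 + τ * a) :=
  IsNilpotent.isUnit_one_add ((Commute.all τ a).isNilpotent_mul_right hτ)

/-- The key identity is `(1 + τ b) (d - a) - (1 + τ a) (d - b) = (a - b) (1 + τ d)`. -/
theorem injective_inverse_one_add_mul_mul_pair {R : Type*} [CommRing R] {τ : R}
    (hunit : ∀ a : R, IsUnit (1 + τ * a)) (c d : R) :
    Function.Injective fun a : R =>
      (Ring.inverse (1 + τ * a) * c, Ring.inverse (1 + τ * a) * (d - a)) := by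
  intro a b h
  obtain ⟨-, hab⟩ := Prod.mk.inj h
  have hcross : (1 + τ * b) * (d - a) = (1 + τ * a) * (d - b) := by
    rw [Ring.inverse_mul_eq_iff_eq_mul _ _ _ (hunit a)] at hab
    rw [hab, mul_left_comm, ← mul_assoc (1 + τ * b), Ring.mul_inverse_cancel _ (hunit b),
      one_mul]
  have hzero : (a - b) * (1 + τ * d) = 0 := by linear_combination -hcross
  exact sub_eq_zero.mp ((hunit d).mul_left_eq_zero.mp hzero)

theorem natCard_quotient_span_eq_pow_natDegree {K : Type*} [Field K] {f : K[X]} (hf : f ≠ 0) :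
    Nat.card (K[X] ⧸ Ideal.span {f}) = Nat.card K ^ f.natDegree := by
  have : Module.Finite K (K[X] ⧸ Ideal.span {f}) := (AdjoinRoot.powerBasis hf).finite
  rw [Module.natCard_eq_pow_finrank (K := K), finrank_quotient_span_eq_natDegree]

theorem stmt14_general (F : Type*) [Field F] [Fintype F]
    (n : ℕ)
    (c d : Polynomial F ⧸ Ideal.span {(X : Polynomial F) ^ (n - 1)}) :
    (∀ a : Polynomial F ⧸ Ideal.span {(X : Polynomial F) ^ (n - 1)},
      IsUnit (1 + Ideal.Quotient.mk (Ideal.span {(X : Polynomial F) ^ (n - 1)}) X * a)) ∧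
    Function.Injective
      (fun a : Polynomial F ⧸ Ideal.span {(X : Polynomial F) ^ (n - 1)} =>
        (Ring.inverse (1 + Ideal.Quotient.mk (Ideal.span {(X : Polynomial F) ^ (n - 1)}) X * a)
            * c,
         Ring.inverse (1 + Ideal.Quotient.mk (Ideal.span {(X : Polynomial F) ^ (n - 1)}) X * a)
            * (d - a))) ∧
    (Set.range
      (fun a : Polynomial F ⧸ Ideal.span {(X : Polynomial F) ^ (n - 1)} =>
        (Ring.inverse (1 + Ideal.Quotient.mk (Ideal.span {(X : Polynomial F) ^ (n - 1)}) X * a)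
            * c,
         Ring.inverse (1 + Ideal.Quotient.mk (Ideal.span {(X : Polynomial F) ^ (n - 1)}) X * a)
            * (d - a)))).ncard = (Fintype.card F) ^ (n - 1) := by
  have hτ : IsNilpotent (Ideal.Quotient.mk (Ideal.span {(X : F[X]) ^ (n - 1)}) X) :=
    ⟨n - 1, by
      rw [← map_pow, Ideal.Quotient.eq_zero_iff_mem]
      exact Ideal.mem_span_singleton_self _⟩
  have hunit := isUnit_one_add_mul_of_isNilpotent hτ
  have hinj := injective_inverse_one_add_mul_mul_pair hunit c d
  refine ⟨hunit, hinj, ?_⟩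
  rw [← Nat.card_coe_set_eq, Nat.card_range_of_injective hinj,
    natCard_quotient_span_eq_pow_natDegree (pow_ne_zero _ X_ne_zero), natDegree_X_pow,
    Nat.card_eq_fintype_card]

theorem stmt14 (p : ℕ) (hp : p.Prime) (F : Type*) [Field F] [Fintype F] [CharP F p]
    (n : ℕ) (hn : 1 ≤ n)
    (c d : Polynomial F ⧸ Ideal.span {(X : Polynomial F) ^ (n - 1)}) :
    (∀ a : Polynomial F ⧸ Ideal.span {(X : Polynomial F) ^ (n - 1)},
      IsUnit (1 + Ideal.Quotient.mk (Ideal.span {(X : Polynomial F) ^ (n - 1)}) X * a)) ∧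
    Function.Injective
      (fun a : Polynomial F ⧸ Ideal.span {(X : Polynomial F) ^ (n - 1)} =>
        (Ring.inverse (1 + Ideal.Quotient.mk (Ideal.span {(X : Polynomial F) ^ (n - 1)}) X * a)
            * c,
         Ring.inverse (1 + Ideal.Quotient.mk (Ideal.span {(X : Polynomial F) ^ (n - 1)}) X * a)
            * (d - a))) ∧
    (Set.range
      (fun a : Polynomial F ⧸ Ideal.span {(X : Polynomial F) ^ (n - 1)} =>
        (Ring.inverse (1 + Ideal.Quotient.mk (Ideal.span {(X : Polynomial F) ^ (n - 1)}) X * a)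
            * c,
         Ring.inverse (1 + Ideal.Quotient.mk (Ideal.span {(X : Polynomial F) ^ (n - 1)}) X * a)
            * (d - a)))).ncard = (Fintype.card F) ^ (n - 1) :=
  stmt14_general F n c d
end

section
/- Let 𝔫 ∈ A be a nonconstant polynomial. Then Γ₁(𝔫) has no nontrivial torsion of order prime to p: if γ ∈ Γ₁(𝔫) satisfies γ^N = 1 for some integer N ≥ 1 not divisible by p, then γ = 1. -/
open Polynomial Matrix

/-!
By Cayley–Hamilton the traces `tₖ = tr γᵏ` satisfy `tₖ₊₂ = tr γ · tₖ₊₁ - tₖ`, so if `tr γ` were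
nonconstant the degrees of the `tₖ` would grow strictly, contradicting `t_N = t₀`. Hence `tr γ` is
a constant congruent to `2` modulo the nonconstant `𝔫`, so `tr γ = 2` and `(γ - 1)² = 0`.
Then `1 = γᴺ = 1 + N (γ - 1)`, and `N` is invertible in characteristic `p ∤ N`.
-/

lemma Matrix.fin_two_sq_eq {R : Type*} [CommRing R] (M : Matrix (Fin 2) (Fin 2) R) :
    M ^ 2 = M.trace • M - M.det • 1 := by
  ext i j
  fin_cases i <;> fin_cases j <;> simp [sq, Matrix.mul_apply, trace_fin_two, det_fin_two] <;> ring

lemma Matrix.pow_add_two_of_det_eq_one {R : Type*} [CommRing R] {M : Matrix (Fin 2) (Fin 2) R}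
    (hM : M.det = 1) (k : ℕ) : M ^ (k + 2) = M.trace • M ^ (k + 1) - M ^ k := by
  rw [pow_add, fin_two_sq_eq, hM, one_smul, mul_sub, mul_one, mul_smul_comm, ← pow_succ]

lemma Matrix.trace_pow_add_two_of_det_eq_one {R : Type*} [CommRing R]
    {M : Matrix (Fin 2) (Fin 2) R} (hM : M.det = 1) (k : ℕ) :
    (M ^ (k + 2)).trace = M.trace * (M ^ (k + 1)).trace - (M ^ k).trace := by
  rw [pow_add_two_of_det_eq_one hM, trace_sub, trace_smul, smul_eq_mul]

lemma Polynomial.natDegree_succ_of_recurrence {R : Type*} [CommRing R] [NoZeroDivisors R]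
    {τ : R[X]} {t : ℕ → R[X]} (hτ : 0 < τ.natDegree) (h0 : (t 0).natDegree = 0) (h1 : t 1 = τ)
    (hrec : ∀ k, t (k + 2) = τ * t (k + 1) - t k) (k : ℕ) :
    (t (k + 1)).natDegree = (t k).natDegree + τ.natDegree := by
  induction k with
  | zero => rw [h0, h1, zero_add]
  | succ k ih =>
    have ht : t (k + 1) ≠ 0 := fun h ↦ by rw [h, natDegree_zero] at ih; omega
    have hτt : (τ * t (k + 1)).natDegree = τ.natDegree + (t (k + 1)).natDegree :=
      natDegree_mul (ne_zero_of_natDegree_gt hτ) ht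
    rw [hrec, natDegree_sub_eq_left_of_natDegree_lt (by omega), hτt, add_comm]

lemma Matrix.natDegree_trace_eq_zero_of_pow_eq_one {R : Type*} [CommRing R] [NoZeroDivisors R]
    {M : Matrix (Fin 2) (Fin 2) R[X]} (hdet : M.det = 1) {N : ℕ} (hN : N ≠ 0) (hM : M ^ N = 1) :
    M.trace.natDegree = 0 := by
  by_contra hτ
  have hτ_pos : 0 < M.trace.natDegree := Nat.pos_of_ne_zero hτ
  have htrace_one : ((M ^ 0).trace).natDegree = 0 := by
    rw [pow_zero, trace_one]
    exact natDegree_natCast _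
  have hmono : StrictMono fun k ↦ (M ^ k).trace.natDegree := by
    refine strictMono_nat_of_lt_succ fun k ↦ ?_
    rw [natDegree_succ_of_recurrence (t := fun k ↦ (M ^ k).trace) hτ_pos htrace_one
      (by rw [pow_one]) (trace_pow_add_two_of_det_eq_one hdet)]
    omega
  have := hmono (Nat.pos_of_ne_zero hN)
  simp only [hM, pow_zero, lt_irrefl] at this

lemma one_add_pow_of_sq_eq_zero {R : Type*} [Ring R] {y : R} (hy : y ^ 2 = 0) (k : ℕ) :
    (1 + y) ^ k = 1 + k * y := by
  induction k with
  | zero => simp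
  | succ k ih =>
    rw [pow_succ, ih, mul_add, mul_one, add_mul, one_mul, mul_assoc, ← sq, hy, mul_zero, add_zero,
      Nat.cast_succ, add_mul, one_mul, add_assoc]

lemma eq_one_of_pow_eq_one_of_sub_one_sq_eq_zero {R : Type*} [Ring R] {x : R}
    (hx : (x - 1) ^ 2 = 0) {N : ℕ} (hN : IsUnit (N : R)) (hxN : x ^ N = 1) : x = 1 := by
  rw [← add_sub_cancel (1 : R) x, one_add_pow_of_sq_eq_zero hx, add_eq_left,
    hN.mul_right_eq_zero] at hxN
  exact sub_eq_zero.mp hxN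

theorem stmt15_general (p : ℕ) (F : Type*) [Field F] [CharP F p]
    (𝔫 : Polynomial F) (h𝔫 : 1 ≤ 𝔫.natDegree)
    (γ : Matrix (Fin 2) (Fin 2) (Polynomial F)) (hγ : γ ∈ Gamma1 F 𝔫)
    (N : ℕ) (hNp : ¬ p ∣ N) (hγN : γ ^ N = 1) :
    γ = 1 := by
  obtain ⟨hdet, -, h00, h11⟩ := hγ
  have htrace_const : γ.trace.natDegree = 0 :=
    natDegree_trace_eq_zero_of_pow_eq_one hdet (by rintro rfl; exact hNp (dvd_zero p)) hγN
  have htrace : γ.trace = 2 := by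
    have hdvd : 𝔫 ∣ γ.trace - 2 := by
      rw [trace_fin_two]
      convert dvd_add h00 h11 using 1
      ring
    refine sub_eq_zero.mp (eq_zero_of_dvd_of_natDegree_lt hdvd ?_)
    have := natDegree_sub_le γ.trace 2
    rw [htrace_const, natDegree_ofNat] at this
    omega
  have hnil : (γ - 1) ^ 2 = 0 := by
    rw [(Commute.one_right γ).sub_sq, fin_two_sq_eq, htrace, hdet, one_smul, mul_one, one_pow,
      two_smul, two_mul]
    abel
  refine eq_one_of_pow_eq_one_of_sub_one_sq_eq_zero hnil ?_ hγN
  have hNF : IsUnit (N : F) := Ne.isUnit ((CharP.cast_eq_zero_iff F p N).not.mpr hNp)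
  simpa only [map_natCast] using hNF.map (algebraMap F (Matrix (Fin 2) (Fin 2) F[X]))

theorem stmt15 (p : ℕ) (hp : p.Prime) (F : Type*) [Field F] [Fintype F] [CharP F p]
    (𝔫 : Polynomial F) (h𝔫 : 1 ≤ 𝔫.natDegree)
    (γ : Matrix (Fin 2) (Fin 2) (Polynomial F)) (hγ : γ ∈ Gamma1 F 𝔫)
    (N : ℕ) (hN : 1 ≤ N) (hNp : ¬ p ∣ N) (hγN : γ ^ N = 1) :
    γ = 1 :=
  stmt15_general p F 𝔫 h𝔫 γ hγ N hNp hγN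
end
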